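/- arXiv:1310.6636 — 6 statements merged into one kernel-verified Lean document; each statement's English description precedes it below -/
import Mathlib

section
/- Let T be α-averaged on a Hilbert space, λ ∈ (0, 1/α), and z⁺ = z + λ(T z − z) + λε for some error vector ε. Then for any fixed point z* of T, ‖z⁺ − z*‖² ≤ ‖z − z*‖² − λ(1/α − λ)‖z − T z‖² + (2‖z + λ(Tz − z) − z*‖ + λ‖ε‖)·λ‖ε‖. -/
open scoped RealInnerProductSpace

def Nonexpansive {H : Type*} [NormedAddCommGroup H] [InnerProductSpace ℝ H]
    (T : H → H) : Prop := ∀ x y, ‖T x - T y‖ ≤ ‖x - y‖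

def Averaged {H : Type*} [NormedAddCommGroup H] [InnerProductSpace ℝ H]
    (α : ℝ) (T : H → H) : Prop :=
  ∃ R : H → H, Nonexpansive R ∧ ∀ x, T x = x + α • (R x - x)

lemma convex_norm_sq {H : Type*} [NormedAddCommGroup H] [InnerProductSpace ℝ H]
    (μ : ℝ) (a b : H) :
    ‖(1-μ)•a + μ•b‖^2 = (1-μ)*‖a‖^2 + μ*‖b‖^2 - μ*(1-μ)*‖a-b‖^2 := by
  have h : ∀ x : H, ‖x‖^2 = ⟪x,x⟫ := fun x => (real_inner_self_eq_norm_sq x).symm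
  rw [h, h, h, h]
  simp only [inner_add_left, inner_add_right, inner_sub_left, inner_sub_right,
    real_inner_smul_left, real_inner_smul_right]
  rw [real_inner_comm b a]
  ring

theorem inexact_relaxed_fejer_step
    {H : Type*} [NormedAddCommGroup H] [InnerProductSpace ℝ H]
    (α lam : ℝ) (hα : α ∈ Set.Ioo (0:ℝ) 1) (hlam : lam ∈ Set.Ioo (0:ℝ) (1/α))
    (T : H → H) (hT : Averaged α T) (z zs ε : H) (hzs : T zs = zs) :
    ‖(z + lam • (T z - z) + lam • ε) - zs‖^2 ≤
      ‖z - zs‖^2 - lam * (1/α - lam) * ‖z - T z‖^2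
        + (2 * ‖z + lam • (T z - z) - zs‖ + lam * ‖ε‖) * (lam * ‖ε‖) := by
  obtain ⟨hα0, hα1⟩ := hα
  obtain ⟨hl0, hl1⟩ := hlam
  obtain ⟨R, hR, hTx⟩ := hT
  have hαne : α ≠ 0 := ne_of_gt hα0
  set μ := lam * α with hμ
  have hμ0 : 0 < μ := mul_pos hl0 hα0
  have hμ1 : μ < 1 := by
    have := (lt_div_iff₀ hα0).mp hl1
    linarith
  -- R zs = zs
  have hRzs : R zs = zs := by
    have h := hTx zs
    rw [hzs] at h
    have : α • (R zs - zs) = 0 := by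
      have h' := h
      rwa [left_eq_add] at h'
    have h2 : R zs - zs = 0 := by
      rcases smul_eq_zero.mp this with h | h
      · exact absurd h hαne
      · exact h
    have := sub_eq_zero.mp h2
    exact this
  set w := z + lam • (T z - z) with hw
  have hwd : w - zs = (1-μ)•(z - zs) + μ•(R z - zs) := by
    rw [hw, hTx z]
    have : lam • (α • (R z - z)) = μ • (R z - z) := by
      rw [smul_smul]
    module
  -- key contraction inequality
  have hRle : ‖R z - zs‖ ≤ ‖z - zs‖ := by
    have := hR z zs
    rwa [hRzs] at this
  have hsub : (z - zs) - (R z - zs) = z - R z := by abel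
  have hkey : ‖w - zs‖^2 ≤ ‖z - zs‖^2 - μ*(1-μ)*‖z - R z‖^2 := by
    rw [hwd, convex_norm_sq, hsub]
    have hsq : ‖R z - zs‖^2 ≤ ‖z - zs‖^2 := by
      apply pow_le_pow_left₀ (norm_nonneg _) hRle
    nlinarith [hμ0.le]
  -- relate ‖z - T z‖ to ‖z - R z‖
  have hzT : ‖z - T z‖^2 = α^2 * ‖z - R z‖^2 := by
    have : z - T z = α • (z - R z) := by rw [hTx z]; module
    rw [this, norm_smul, Real.norm_eq_abs, abs_of_pos hα0, mul_pow]
  have hcoef : lam * (1/α - lam) * ‖z - T z‖^2 = μ*(1-μ)*‖z - R z‖^2 := by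
    rw [hzT, hμ]
    field_simp
  -- step 1: error expansion
  have hεn : ‖lam • ε‖ = lam * ‖ε‖ := by
    rw [norm_smul, Real.norm_eq_abs, abs_of_pos hl0]
  have hexp : ‖(w - zs) + lam • ε‖^2 ≤ ‖w - zs‖^2 + 2*‖w - zs‖*(lam*‖ε‖) + (lam*‖ε‖)^2 := by
    have h1 := norm_add_sq_real (w - zs) (lam • ε)
    have h2 := real_inner_le_norm (w - zs) (lam • ε)
    rw [hεn] at h1 h2
    nlinarith
  have heq : (z + lam • (T z - z) + lam • ε) - zs = (w - zs) + lam • ε := by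
    rw [hw]; abel
  rw [heq, hcoef]
  calc ‖(w - zs) + lam • ε‖^2 ≤ ‖w - zs‖^2 + 2*‖w - zs‖*(lam*‖ε‖) + (lam*‖ε‖)^2 := hexp
    _ ≤ ‖z - zs‖^2 - μ*(1-μ)*‖z - R z‖^2 + (2*‖w - zs‖ + lam*‖ε‖)*(lam*‖ε‖) := by nlinarith
end

section
/- Under the exact relaxed iteration of an α-averaged operator with non-decreasing λ_k ∈ [1/(2α), 1/α), the residual satisfies the pointwise bound ‖e_k‖² ≤ ‖z_0 − z*‖² / (τ_k (k+1)), where τ_k = λ_k(1/α − λ_k). -/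
/-!
Writing `T = I + α (R - I)` with `R` nonexpansive, the residual map `I - T` is
`1/(2α)`-cocoercive. Cocoercivity gives Fejér monotonicity with decrease
`‖z_{k+1} - z*‖² ≤ ‖z_k - z*‖² - τ_k ‖e_k‖²`, and also that `‖e_k‖` is non-increasing as long
as `λ_k ≤ 1/α`. Since `λ_k ≥ 1/(2α)` lies on the decreasing branch of `t ↦ t (1/α - t)`,
`τ_k` is non-increasing too, so each of the first `k + 1` Fejér decrements is at least
`τ_k ‖e_k‖²`, and their sum is at most `‖z_0 - z*‖²`.
-/

open scoped RealInnerProductSpace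

section Cocoercive

variable {H : Type*} [NormedAddCommGroup H] [InnerProductSpace ℝ H]

def Cocoercive (β : ℝ) (F : H → H) : Prop :=
  ∀ x y, β * ‖F x - F y‖ ^ 2 ≤ ⟪F x - F y, x - y⟫

theorem Nonexpansive.cocoercive_id_sub {R : H → H} (hR : Nonexpansive R) :
    Cocoercive (1 / 2) (fun x => x - R x) := by
  intro x y
  have hsq : ‖R x - R y‖ ^ 2 ≤ ‖x - y‖ ^ 2 := pow_le_pow_left₀ (norm_nonneg _) (hR x y) 2
  rw [show R x - R y = (x - y) - ((x - R x) - (y - R y)) by abel, norm_sub_sq_real,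
    real_inner_comm] at hsq
  linarith

theorem Averaged.cocoercive_id_sub {α : ℝ} {T : H → H} (hα : 0 < α) (hT : Averaged α T) :
    Cocoercive (1 / (2 * α)) (fun x => x - T x) := by
  obtain ⟨R, hR, hTR⟩ := hT
  intro x y
  have hres : (x - T x) - (y - T y) = α • ((x - R x) - (y - R y)) := by
    rw [hTR x, hTR y]; module
  have hR' := hR.cocoercive_id_sub x y
  simp only at hR'
  rw [hres, norm_smul, real_inner_smul_left, Real.norm_eq_abs, abs_of_pos hα, mul_pow]
  calc 1 / (2 * α) * (α ^ 2 * ‖x - R x - (y - R y)‖ ^ 2)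
      = α * (1 / 2 * ‖x - R x - (y - R y)‖ ^ 2) := by field_simp
    _ ≤ α * ⟪x - R x - (y - R y), x - y⟫ := mul_le_mul_of_nonneg_left hR' hα.le

variable {β : ℝ} {F : H → H}

theorem Cocoercive.norm_sub_sq_le_of_step (hF : Cocoercive β F) {zs : H} (hzs : F zs = 0)
    (z : H) {t : ℝ} (ht : 0 ≤ t) :
    ‖z - t • F z - zs‖ ^ 2 ≤ ‖z - zs‖ ^ 2 - t * (2 * β - t) * ‖F z‖ ^ 2 := by
  have hco := hF z zs
  rw [hzs, sub_zero] at hco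
  rw [show z - t • F z - zs = (z - zs) - t • F z by abel, norm_sub_sq_real, norm_smul,
    real_inner_smul_right, Real.norm_eq_abs, abs_of_nonneg ht, real_inner_comm]
  nlinarith [mul_le_mul_of_nonneg_left hco ht]

theorem Cocoercive.norm_apply_sq_le_of_step (hF : Cocoercive β F) (z : H) {t : ℝ}
    (ht₀ : 0 < t) (ht : t ≤ 2 * β) :
    ‖F (z - t • F z)‖ ^ 2 ≤ ‖F z‖ ^ 2 := by
  set d := F (z - t • F z) - F z
  have hco : β * ‖d‖ ^ 2 ≤ -(t * ⟪d, F z⟫) := by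
    simpa [real_inner_smul_right] using hF (z - t • F z) z
  have hexp : ‖F (z - t • F z)‖ ^ 2 = ‖F z‖ ^ 2 + 2 * ⟪d, F z⟫ + ‖d‖ ^ 2 := by
    rw [show F (z - t • F z) = F z + d from (add_sub_cancel _ _).symm, norm_add_sq_real,
      real_inner_comm]
  -- `2 t ⟪d, F z⟫ ≤ -2β ‖d‖² ≤ -t ‖d‖²`; divide by `t > 0`.
  have hinner : 2 * ⟪d, F z⟫ + ‖d‖ ^ 2 ≤ 0 := by
    refine nonpos_of_mul_nonpos_right ?_ ht₀
    nlinarith [sq_nonneg ‖d‖]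
  linarith

end Cocoercive

theorem antitoneOn_mul_sub_self (c : ℝ) :
    AntitoneOn (fun t => t * (c - t)) (Set.Ici (c / 2)) := by
  intro s hs t ht hst
  simp only [Set.mem_Ici] at hs ht
  nlinarith

theorem succ_mul_le_of_le_sub {a b : ℕ → ℝ} (hb : Antitone b) (ha : ∀ k, 0 ≤ a k)
    (hab : ∀ k, a (k + 1) ≤ a k - b k) (k : ℕ) :
    (k + 1) * b k ≤ a 0 := by
  have htele : ∀ n, ∑ j ∈ Finset.range n, b j + a n ≤ a 0 := by
    intro n
    induction n with
    | zero => simp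
    | succ n ih => rw [Finset.sum_range_succ]; linarith [hab n]
  have hsum := (Finset.range (k + 1)).card_nsmul_le_sum b (b k)
    fun j hj => hb (Nat.lt_succ_iff.mp (Finset.mem_range.mp hj))
  rw [Finset.card_range, nsmul_eq_mul] at hsum
  push_cast at hsum
  linarith [htele (k + 1), ha (k + 1)]

theorem pointwise_residual_bound_nondecreasing_relaxation
    {H : Type*} [NormedAddCommGroup H] [InnerProductSpace ℝ H]
    (α : ℝ) (hα : α ∈ Set.Ioo (0:ℝ) 1)
    (T : H → H) (hT : Averaged α T)
    (zs : H) (hzs : T zs = zs)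
    (lam : ℕ → ℝ) (hlam : ∀ k, lam k ∈ Set.Ico (1/(2*α)) (1/α))
    (hmono : Monotone lam)
    (z : ℕ → H) (hz : ∀ k, z (k+1) = z k + lam k • (T (z k) - z k))
    (e : ℕ → H) (he : ∀ k, e k = z k - T (z k))
    (τ : ℕ → ℝ) (hτ : ∀ k, τ k = lam k * (1/α - lam k)) :
    ∀ k, ‖e k‖^2 ≤ ‖z 0 - zs‖^2 / (τ k * (k+1)) := by
  obtain ⟨hα₀, -⟩ := hα
  have hF := hT.cocoercive_id_sub hα₀
  have htwo : 2 * (1 / (2 * α)) = 1 / α := by field_simp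
  have hlam₀ k : 0 < lam k := lt_of_lt_of_le (by positivity) (hlam k).1
  have hstep k : z (k + 1) = z k - lam k • e k := by rw [hz k, he k]; module
  have hτ₀ k : 0 < τ k := hτ k ▸ mul_pos (hlam₀ k) (sub_pos.2 (hlam k).2)
  have hfejer k : ‖z (k + 1) - zs‖ ^ 2 ≤ ‖z k - zs‖ ^ 2 - τ k * ‖e k‖ ^ 2 := by
    rw [hstep, hτ, he, ← htwo]
    exact hF.norm_sub_sq_le_of_step (by simp [hzs]) (z k) (hlam₀ k).le
  have he_anti : Antitone fun k => ‖e k‖ ^ 2 := antitone_nat_of_succ_le fun k => by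
    simp only [he, hstep]
    exact hF.norm_apply_sq_le_of_step (z k) (hlam₀ k) (htwo ▸ (hlam k).2.le)
  have hτ_anti : Antitone τ := fun j k hjk => by
    have hhalf : 1 / α / 2 = 1 / (2 * α) := by ring
    rw [hτ, hτ]
    exact antitoneOn_mul_sub_self (1 / α) (hhalf ▸ (hlam j).1) (hhalf ▸ (hlam k).1) (hmono hjk)
  have hdecr_anti : Antitone fun k => τ k * ‖e k‖ ^ 2 := fun j k hjk =>
    mul_le_mul (hτ_anti hjk) (he_anti hjk) (sq_nonneg _) (hτ₀ j).le
  intro k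
  rw [le_div_iff₀ (by have := hτ₀ k; positivity)]
  linarith [succ_mul_le_of_le_sub hdecr_anti (fun k => sq_nonneg ‖z k - zs‖) hfejer k]
end

section
/- Ergodic rate: let T be nonexpansive with fixed point z*, λ_k ∈ (0,1), and z_{k+1} = z_k + λ_k(T z_k − z_k) + λ_k ε_k with C₃ := Σ_j λ_j‖ε_j‖ < ∞. Set e_k = z_k − T z_k, Λ_k = Σ_{j=0}^k λ_j, and ē_k = (1/Λ_k) Σ_{j=0}^k λ_j e_j. Then ‖ē_k‖ ≤ 2(‖z_0 − z*‖ + C₃)/Λ_k. -/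
open scoped RealInnerProductSpace

theorem ergodic_residual_bound
    {H : Type*} [NormedAddCommGroup H] [InnerProductSpace ℝ H]
    (T : H → H) (hT : Nonexpansive T)
    (zs : H) (hzs : T zs = zs)
    (lam : ℕ → ℝ) (hlam : ∀ k, lam k ∈ Set.Ioo (0:ℝ) 1)
    (ε : ℕ → H) (hsum : Summable fun j => lam j * ‖ε j‖)
    (C₃ : ℝ) (hC₃ : C₃ = ∑' j, lam j * ‖ε j‖)
    (z : ℕ → H) (hz : ∀ k, z (k+1) = z k + lam k • (T (z k) - z k) + lam k • ε k)
    (e : ℕ → H) (he : ∀ k, e k = z k - T (z k))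
    (Λ : ℕ → ℝ) (hΛ : ∀ k, Λ k = ∑ j ∈ Finset.range (k+1), lam j)
    (ebar : ℕ → H) (hebar : ∀ k, ebar k = (Λ k)⁻¹ • ∑ j ∈ Finset.range (k+1), lam j • e j) :
    ∀ k, ‖ebar k‖ ≤ 2 * (‖z 0 - zs‖ + C₃) / Λ k := by
  have hnn : ∀ j, 0 ≤ lam j * ‖ε j‖ := fun j =>
    mul_nonneg (le_of_lt (hlam j).1) (norm_nonneg _)
  have hpart : ∀ n, ∑ j ∈ Finset.range n, lam j * ‖ε j‖ ≤ C₃ := by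
    intro n
    rw [hC₃]
    exact Summable.sum_le_tsum _ (fun j _ => hnn j) hsum
  have hC₃nn : 0 ≤ C₃ := le_trans (by simp) (hpart 0)
  -- Fejér-type bound
  have hfej : ∀ n, ‖z n - zs‖ ≤ ‖z 0 - zs‖ + ∑ j ∈ Finset.range n, lam j * ‖ε j‖ := by
    intro n
    induction n with
    | zero => simp
    | succ n ih =>
      have hstep : z (n+1) - zs =
          ((1 - lam n) • (z n - zs) + lam n • (T (z n) - zs)) + lam n • ε n := by
        rw [hz n]; module
      have h1 : ‖(1 - lam n) • (z n - zs) + lam n • (T (z n) - zs)‖ ≤ ‖z n - zs‖ := by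
        calc ‖(1 - lam n) • (z n - zs) + lam n • (T (z n) - zs)‖
            ≤ ‖(1 - lam n) • (z n - zs)‖ + ‖lam n • (T (z n) - zs)‖ := norm_add_le _ _
          _ = (1 - lam n) * ‖z n - zs‖ + lam n * ‖T (z n) - zs‖ := by
              rw [norm_smul, norm_smul, Real.norm_eq_abs, Real.norm_eq_abs,
                abs_of_nonneg (by linarith [(hlam n).2]),
                abs_of_nonneg (le_of_lt (hlam n).1)]
          _ ≤ (1 - lam n) * ‖z n - zs‖ + lam n * ‖z n - zs‖ := by
              have := hT (z n) zs
              rw [hzs] at this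
              nlinarith [(hlam n).1]
          _ = ‖z n - zs‖ := by ring
      have h2 : ‖z (n+1) - zs‖ ≤ ‖z n - zs‖ + lam n * ‖ε n‖ := by
        calc ‖z (n+1) - zs‖ ≤ ‖(1 - lam n) • (z n - zs) + lam n • (T (z n) - zs)‖
              + ‖lam n • ε n‖ := by rw [hstep]; exact norm_add_le _ _
          _ ≤ ‖z n - zs‖ + lam n * ‖ε n‖ := by
              rw [norm_smul, Real.norm_eq_abs, abs_of_nonneg (le_of_lt (hlam n).1)]
              linarith
      rw [Finset.sum_range_succ]
      linarith
  -- telescoping identity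
  have htel : ∀ n, ∑ j ∈ Finset.range n, lam j • e j =
      z 0 - z n + ∑ j ∈ Finset.range n, lam j • ε j := by
    intro n
    induction n with
    | zero => simp
    | succ n ih =>
      rw [Finset.sum_range_succ, Finset.sum_range_succ, ih, he n, hz n]
      module
  intro k
  have hΛpos : 0 < Λ k := by
    rw [hΛ]
    exact Finset.sum_pos (fun j _ => (hlam j).1) ⟨0, Finset.mem_range.2 (Nat.succ_pos k)⟩
  have hεsum : ‖∑ j ∈ Finset.range (k+1), lam j • ε j‖ ≤ C₃ := by
    calc ‖∑ j ∈ Finset.range (k+1), lam j • ε j‖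
        ≤ ∑ j ∈ Finset.range (k+1), ‖lam j • ε j‖ := norm_sum_le _ _
      _ = ∑ j ∈ Finset.range (k+1), lam j * ‖ε j‖ := by
          refine Finset.sum_congr rfl fun j _ => ?_
          rw [norm_smul, Real.norm_eq_abs, abs_of_nonneg (le_of_lt (hlam j).1)]
      _ ≤ C₃ := hpart _
  have hnum : ‖∑ j ∈ Finset.range (k+1), lam j • e j‖ ≤ 2 * (‖z 0 - zs‖ + C₃) := by
    rw [htel]
    calc ‖z 0 - z (k+1) + ∑ j ∈ Finset.range (k+1), lam j • ε j‖
        ≤ ‖z 0 - z (k+1)‖ + ‖∑ j ∈ Finset.range (k+1), lam j • ε j‖ := norm_add_le _ _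
      _ ≤ (‖z 0 - zs‖ + ‖z (k+1) - zs‖) + C₃ := by
          have : ‖z 0 - z (k+1)‖ ≤ ‖z 0 - zs‖ + ‖z (k+1) - zs‖ := by
            have := norm_sub_le_norm_sub_add_norm_sub (z 0) zs (z (k+1))
            calc ‖z 0 - z (k+1)‖ ≤ ‖z 0 - zs‖ + ‖zs - z (k+1)‖ := by
                  simpa using norm_sub_le_norm_sub_add_norm_sub (z 0) zs (z (k+1))
              _ = ‖z 0 - zs‖ + ‖z (k+1) - zs‖ := by rw [norm_sub_rev zs]
          linarith
      _ ≤ 2 * (‖z 0 - zs‖ + C₃) := by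
          have := hfej (k+1)
          have := hpart (k+1)
          linarith
  rw [hebar, norm_smul, Real.norm_eq_abs, abs_of_nonneg (le_of_lt (inv_pos.2 hΛpos))]
  rw [div_eq_inv_mul]
  exact mul_le_mul_of_nonneg_left hnum (le_of_lt (inv_pos.2 hΛpos))
end

section
/- If T₁ is α₁-averaged and T₂ is α₂-averaged with α₁, α₂ ∈ (0,1), then T₁ ∘ T₂ is α-averaged with α = (α₁ + α₂ − 2α₁α₂)/(1 − α₁α₂), and α ∈ (0,1). -/
open scoped RealInnerProductSpace

lemma averaged_ineq {H : Type*} [NormedAddCommGroup H] [InnerProductSpace ℝ H]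
    {α : ℝ} (hα : α ∈ Set.Ioo (0:ℝ) 1) {T : H → H} (h : Averaged α T) (x y : H) :
    ‖T x - T y‖^2 + ((1-α)/α) * ‖(x - y) - (T x - T y)‖^2 ≤ ‖x - y‖^2 := by
  obtain ⟨R, hR, hT⟩ := h
  have hα0 := hα.1
  set v := x - y with hv
  set p := R x - R y with hp
  have hTd : T x - T y = v + α • (p - v) := by
    rw [hT x, hT y]; simp only [hv, hp]
    rw [smul_sub, smul_sub]; module
  have hdiff : (x - y) - (T x - T y) = (-α) • (p - v) := by
    rw [hTd]; module
  have hpv : ‖p‖^2 ≤ ‖v‖^2 := by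
    have := hR x y
    nlinarith [norm_nonneg (R x - R y), norm_nonneg (x - y)]
  have hexp : ‖p‖^2 = ‖v‖^2 + 2*⟪v, p - v⟫ + ‖p - v‖^2 := by
    have h := norm_add_sq_real v (p - v)
    rwa [show v + (p - v) = p by abel] at h
  have h1 : ‖T x - T y‖^2 = ‖v‖^2 + 2*(α * ⟪v, p - v⟫) + α^2 * ‖p - v‖^2 := by
    rw [hTd, norm_add_sq_real, real_inner_smul_right, norm_smul]
    simp [abs_of_pos hα0, mul_pow]
  have h2 : ‖(x - y) - (T x - T y)‖^2 = α^2 * ‖p - v‖^2 := by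
    rw [hdiff, norm_smul]
    simp [abs_of_pos hα0, mul_pow]
  rw [h1, h2]
  have key : 2*⟪v, p - v⟫ + ‖p - v‖^2 ≤ 0 := by nlinarith [hpv, hexp]
  have : (1-α)/α * (α^2 * ‖p - v‖^2) = α * (1-α) * ‖p - v‖^2 := by
    field_simp
  rw [this]
  nlinarith [key, hα.2, sq_nonneg ‖p - v‖]

lemma ineq_averaged {H : Type*} [NormedAddCommGroup H] [InnerProductSpace ℝ H]
    {α : ℝ} (hα : α ∈ Set.Ioo (0:ℝ) 1) {T : H → H}
    (h : ∀ x y, ‖T x - T y‖^2 + ((1-α)/α) * ‖(x - y) - (T x - T y)‖^2 ≤ ‖x - y‖^2) :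
    Averaged α T := by
  have hα0 := hα.1
  have hαne : α ≠ 0 := ne_of_gt hα0
  refine ⟨fun x => x + α⁻¹ • (T x - x), ?_, ?_⟩
  · intro x y
    set v := x - y with hv
    set w := T x - T y with hw
    have hR : (x + α⁻¹ • (T x - x)) - (y + α⁻¹ • (T y - y)) = v + α⁻¹ • (w - v) := by
      simp only [hv, hw, smul_sub]; abel
    have hwexp : ‖w‖^2 = ‖v‖^2 + 2*⟪v, w - v⟫ + ‖w - v‖^2 := by
      have h := norm_add_sq_real v (w - v)
      rwa [show v + (w - v) = w by abel] at h
    have hvw : ‖v - w‖ = ‖w - v‖ := by rw [← neg_sub, norm_neg]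
    have hineq := h x y
    rw [← hv, ← hw, hvw] at hineq
    have key : 2*⟪v, w - v⟫ + α⁻¹ * ‖w - v‖^2 ≤ 0 := by
      have hd : (1-α)/α = α⁻¹ - 1 := by field_simp
      rw [hd] at hineq
      nlinarith [hineq, hwexp]
    have hnorm2 : ‖v + α⁻¹ • (w - v)‖^2 = ‖v‖^2 + 2*(α⁻¹ * ⟪v, w - v⟫) + α⁻¹^2 * ‖w - v‖^2 := by
      rw [norm_add_sq_real, real_inner_smul_right, norm_smul]
      simp [abs_of_pos (inv_pos.mpr hα0), mul_pow]
    have hle2 : ‖v + α⁻¹ • (w - v)‖^2 ≤ ‖v‖^2 := by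
      rw [hnorm2]
      have hinv : (0:ℝ) < α⁻¹ := inv_pos.mpr hα0
      nlinarith [key, hinv, sq_nonneg ‖w - v‖]
    rw [hR]
    exact (pow_le_pow_iff_left₀ (norm_nonneg _) (norm_nonneg _) two_ne_zero).mp hle2
  · intro x
    rw [add_sub_cancel_left, smul_smul, mul_inv_cancel₀ hαne, one_smul]
    abel

theorem composition_of_averaged
    {H : Type*} [NormedAddCommGroup H] [InnerProductSpace ℝ H]
    (α₁ α₂ : ℝ) (hα₁ : α₁ ∈ Set.Ioo (0:ℝ) 1) (hα₂ : α₂ ∈ Set.Ioo (0:ℝ) 1)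
    (T₁ T₂ : H → H) (h₁ : Averaged α₁ T₁) (h₂ : Averaged α₂ T₂) :
    Averaged ((α₁ + α₂ - 2*α₁*α₂)/(1 - α₁*α₂)) (T₁ ∘ T₂) ∧
      (α₁ + α₂ - 2*α₁*α₂)/(1 - α₁*α₂) ∈ Set.Ioo (0:ℝ) 1 := by
  obtain ⟨hα₁0, hα₁1⟩ := hα₁
  obtain ⟨hα₂0, hα₂1⟩ := hα₂
  have hden : (0:ℝ) < 1 - α₁*α₂ := by nlinarith
  have hnum : (0:ℝ) < α₁ + α₂ - 2*α₁*α₂ := by nlinarith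
  set α := (α₁ + α₂ - 2*α₁*α₂)/(1 - α₁*α₂) with hαdef
  have hα0 : 0 < α := div_pos hnum hden
  have hα1 : α < 1 := by
    rw [hαdef, div_lt_one hden]; nlinarith
  have hαIoo : α ∈ Set.Ioo (0:ℝ) 1 := ⟨hα0, hα1⟩
  refine ⟨?_, hαIoo⟩
  apply ineq_averaged hαIoo
  intro x y
  have A := averaged_ineq ⟨hα₁0, hα₁1⟩ h₁ (T₂ x) (T₂ y)
  have B := averaged_ineq ⟨hα₂0, hα₂1⟩ h₂ x y
  set v := x - y with hv
  set u := T₂ x - T₂ y with hu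
  set w := T₁ (T₂ x) - T₁ (T₂ y) with hww
  have hcomp : (T₁ ∘ T₂) x - (T₁ ∘ T₂) y = w := rfl
  rw [hcomp]
  -- v - w = (v - u) + (u - w)
  have hsplit : v - w = (v - u) + (u - w) := by abel
  have hexp : ‖v - w‖^2 = ‖v - u‖^2 + 2*⟪v - u, u - w⟫ + ‖u - w‖^2 := by
    rw [hsplit]; exact norm_add_sq_real _ _
  have hCS : ⟪v - u, u - w⟫ ≤ ‖v - u‖ * ‖u - w‖ := real_inner_le_norm _ _
  set a := ‖v - u‖ with ha
  set b := ‖u - w‖ with hb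
  have ha0 : 0 ≤ a := norm_nonneg _
  have hb0 : 0 ≤ b := norm_nonneg _
  -- constants
  set c₁ := (1-α₁)/α₁ with hc₁
  set c₂ := (1-α₂)/α₂ with hc₂
  have hc₁0 : 0 < c₁ := div_pos (by linarith) hα₁0
  have hc₂0 : 0 < c₂ := div_pos (by linarith) hα₂0
  have hc : (1-α)/α = c₁*c₂/(c₁+c₂) := by
    rw [hαdef, hc₁, hc₂]
    have h1 : α₁ ≠ 0 := ne_of_gt hα₁0
    have h2 : α₂ ≠ 0 := ne_of_gt hα₂0
    have h3 : (1 - α₁*α₂) ≠ 0 := ne_of_gt hden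
    have h5 : α₁ + α₂ - 2*α₁*α₂ ≠ 0 := ne_of_gt hnum
    have e2 : (1-α₁)/α₁+(1-α₂)/α₂ = (α₁ + α₂ - 2*α₁*α₂)/(α₁*α₂) := by
      field_simp; ring
    rw [e2, div_eq_div_iff (by positivity) (by positivity)]
    field_simp
    ring
  rw [hc]
  have hsum : 0 < c₁ + c₂ := add_pos hc₁0 hc₂0
  -- key quadratic inequality: c₁c₂/(c₁+c₂) * (a+b)² ≤ c₂ a² + c₁ b²
  have hquad : c₁*c₂/(c₁+c₂) * (a^2 + 2*(a*b) + b^2) ≤ c₂ * a^2 + c₁ * b^2 := by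
    rw [div_mul_eq_mul_div, div_le_iff₀ hsum]
    nlinarith [sq_nonneg (c₂*a - c₁*b)]
  have hvwle : ‖v - w‖^2 ≤ a^2 + 2*(a*b) + b^2 := by
    rw [hexp]; nlinarith [hCS]
  have hmono : c₁*c₂/(c₁+c₂) * ‖v - w‖^2 ≤ c₁*c₂/(c₁+c₂) * (a^2 + 2*(a*b) + b^2) := by
    apply mul_le_mul_of_nonneg_left hvwle
    positivity
  linarith [A, B, hquad, hmono]
end

section
/- Inexact residual monotonicity: for the inexact relaxed iteration z_{k+1} = z_k + λ_k(e_k^ε) where the computed update satisfies e_k = (z_k − z_{k+1})/λ_k + ε_k with e_k = z_k − T z_k, T α-averaged, and λ_k ∈ (0, 1/α), one has ‖e_{k+1}‖² ≤ ‖e_k‖² + ν₂‖ε_k‖, where ν₂ = 2 sup_j ‖e_j − e_{j+1}‖ (assumed finite). -/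
open scoped RealInnerProductSpace

/-! The residual `Id - T` of an `α`-averaged map is `α (Id - R)` with `R` nonexpansive, and
`Id - R` is `1/2`-cocoercive; hence `d := e_k - e_{k+1}` satisfies
`‖d‖² ≤ 2 α λ_k ⟪e_k - ε_k, d⟫`. Expanding `‖e_{k+1}‖² = ‖e_k - d‖²` and using `α λ_k ≤ 1`
cancels everything but the error term `-2 ⟪ε_k, d⟫ ≤ 2 ‖ε_k‖ ‖d‖ ≤ ν₂ ‖ε_k‖`. -/

section

variable {H : Type*} [NormedAddCommGroup H] [InnerProductSpace ℝ H]

theorem norm_sub_sq_le_two_inner_of_norm_le {u v : H} (h : ‖v‖ ≤ ‖u‖) :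
    ‖u - v‖ ^ 2 ≤ 2 * ⟪u, u - v⟫ := by
  have hv : ‖v‖ ^ 2 ≤ ‖u‖ ^ 2 := pow_le_pow_left₀ (norm_nonneg v) h 2
  rw [norm_sub_sq_real, inner_sub_right, real_inner_self_eq_norm_sq]
  linarith

theorem Nonexpansive.norm_sq_sub_le_two_inner {R : H → H} (hR : Nonexpansive R) (x y : H) :
    ‖(x - R x) - (y - R y)‖ ^ 2 ≤ 2 * ⟪x - y, (x - R x) - (y - R y)⟫ := by
  rw [show (x - R x) - (y - R y) = (x - y) - (R x - R y) by abel]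
  exact norm_sub_sq_le_two_inner_of_norm_le (hR x y)

theorem Averaged.norm_sq_sub_le_two_mul_inner {α : ℝ} {T : H → H} (hT : Averaged α T)
    (x y : H) :
    ‖(x - T x) - (y - T y)‖ ^ 2 ≤ 2 * α * ⟪x - y, (x - T x) - (y - T y)⟫ := by
  obtain ⟨R, hR, hTR⟩ := hT
  have hres : (x - T x) - (y - T y) = α • ((x - R x) - (y - R y)) := by
    rw [hTR x, hTR y]; module
  rw [hres, norm_smul, mul_pow, Real.norm_eq_abs, sq_abs, real_inner_smul_right]
  nlinarith [mul_le_mul_of_nonneg_left (hR.norm_sq_sub_le_two_inner x y) (sq_nonneg α)]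

theorem norm_sub_sq_le_of_norm_sq_le_inner {e d ε : H} {c : ℝ} (hc : 0 < c) (hc1 : c ≤ 1)
    (h : ‖d‖ ^ 2 ≤ 2 * c * ⟪e - ε, d⟫) :
    ‖e - d‖ ^ 2 ≤ ‖e‖ ^ 2 + 2 * ‖ε‖ * ‖d‖ := by
  have hεd : -(‖ε‖ * ‖d‖) ≤ ⟪ε, d⟫ := (abs_le.mp (abs_real_inner_le_norm ε d)).1
  have hscaled : c * ‖e - d‖ ^ 2 ≤ c * (‖e‖ ^ 2 + 2 * ‖ε‖ * ‖d‖) := by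
    rw [norm_sub_sq_real]
    rw [inner_sub_left] at h
    nlinarith [mul_nonneg (sub_nonneg.mpr hc1) (sq_nonneg ‖d‖)]
  exact le_of_mul_le_mul_left hscaled hc

end

theorem inexact_residual_quasi_monotone
    {H : Type*} [NormedAddCommGroup H] [InnerProductSpace ℝ H]
    (α : ℝ) (hα : α ∈ Set.Ioo (0:ℝ) 1)
    (T : H → H) (hT : Averaged α T)
    (lam : ℕ → ℝ) (hlam : ∀ k, lam k ∈ Set.Ioo (0:ℝ) (1/α))
    (ε : ℕ → H)
    (z : ℕ → H) (e : ℕ → H) (he : ∀ k, e k = z k - T (z k))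
    (hz : ∀ k, z (k+1) = z k - lam k • (e k - ε k))
    (ν₂ : ℝ) (hν₂ : ∀ k, 2 * ‖e k - e (k+1)‖ ≤ ν₂) :
    ∀ k, ‖e (k+1)‖^2 ≤ ‖e k‖^2 + ν₂ * ‖ε k‖ := by
  intro k
  obtain ⟨hlam0, hlam1⟩ := hlam k
  have hαlam : α * lam k ≤ 1 := by
    have := mul_lt_mul_of_pos_left hlam1 hα.1
    rw [mul_one_div_cancel hα.1.ne'] at this
    exact this.le
  have hstep : z k - z (k+1) = lam k • (e k - ε k) := by rw [hz k]; abel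
  have hcoco : ‖e k - e (k+1)‖ ^ 2 ≤ 2 * (α * lam k) * ⟪e k - ε k, e k - e (k+1)⟫ := by
    have := hT.norm_sq_sub_le_two_mul_inner (z k) (z (k+1))
    rwa [← he, ← he, hstep, real_inner_smul_left, ← mul_assoc, mul_assoc 2] at this
  have hexp := norm_sub_sq_le_of_norm_sq_le_inner (mul_pos hα.1 hlam0) hαlam hcoco
  rw [sub_sub_cancel] at hexp
  linarith [mul_le_mul_of_nonneg_right (hν₂ k) (norm_nonneg (ε k))]
end

section
/- If (a_k) is a sequence of nonnegative reals with a_{k+1}² ≤ a_k² + c_k for a summable nonnegative sequence (c_k), and Σ_j τ_j a_j² ≤ D for nonnegative τ_j with inf_j τ_j = τ > 0, then a_k² ≤ (D + τ̄·Σ_{ℓ} (ℓ+1)c_ℓ)/(τ(k+1)) whenever Σ_ℓ (ℓ+1)c_ℓ < ∞ and τ̄ = sup_j τ_j < ∞. -/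
theorem abstract_pointwise_sequence_lemma
    (a c τ : ℕ → ℝ)
    (ha : ∀ k, 0 ≤ a k) (hc : ∀ k, 0 ≤ c k)
    (hquasi : ∀ k, a (k+1)^2 ≤ a k^2 + c k)
    (hcsum : Summable fun ℓ : ℕ => ((ℓ : ℝ) + 1) * c ℓ)
    (τ₀ τbar D : ℝ) (hτ₀ : 0 < τ₀)
    (hτlow : ∀ j, τ₀ ≤ τ j) (hτup : ∀ j, τ j ≤ τbar)
    (hD : ∀ k, ∑ j ∈ Finset.range (k+1), τ j * a j^2 ≤ D) :
    ∀ k, a k^2 ≤ (D + τbar * ∑' ℓ : ℕ, ((ℓ : ℝ) + 1) * c ℓ) / (τ₀ * (k+1)) := by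
  -- quasi-monotonicity
  have hmono : ∀ j k, j ≤ k → a k ^ 2 ≤ a j ^ 2 + ∑ ℓ ∈ Finset.Ico j k, c ℓ := by
    intro j k hjk
    induction k with
    | zero =>
      interval_cases j
      simp
    | succ k ih =>
      rcases Nat.lt_or_ge j (k+1) with h | h
      · have hjk' : j ≤ k := Nat.lt_succ_iff.mp h
        have := ih hjk'
        calc a (k+1) ^ 2 ≤ a k ^ 2 + c k := hquasi k
          _ ≤ (a j ^ 2 + ∑ ℓ ∈ Finset.Ico j k, c ℓ) + c k := by linarith
          _ = a j ^ 2 + ∑ ℓ ∈ Finset.Ico j (k+1), c ℓ := by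
              rw [Finset.sum_Ico_succ_top hjk']; ring
      · have : j = k + 1 := le_antisymm hjk h
        subst this; simp
  -- double sum identity
  have hswap : ∀ k : ℕ, ∑ j ∈ Finset.range (k+1), ∑ ℓ ∈ Finset.Ico j k, c ℓ
      = ∑ ℓ ∈ Finset.range k, ((ℓ : ℝ) + 1) * c ℓ := by
    intro k
    induction k with
    | zero => simp
    | succ k ih =>
      rw [Finset.sum_range_succ (f := fun ℓ => ((ℓ : ℝ) + 1) * c ℓ), ← ih]
      rw [Finset.sum_range_succ (f := fun j => ∑ ℓ ∈ Finset.Ico j (k+1), c ℓ)]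
      have : ∀ j ∈ Finset.range (k+1), ∑ ℓ ∈ Finset.Ico j (k+1), c ℓ
          = (∑ ℓ ∈ Finset.Ico j k, c ℓ) + c k := by
        intro j hj
        rw [Finset.sum_Ico_succ_top (Nat.lt_succ_iff.mp (Finset.mem_range.mp hj))]
      rw [Finset.sum_congr rfl this, Finset.sum_add_distrib]
      simp [Finset.sum_const]
      try ring
  intro k
  have hτbar : 0 ≤ τbar := le_trans (le_of_lt hτ₀) (le_trans (hτlow 0) (hτup 0))
  have hT : 0 ≤ ∑' ℓ : ℕ, ((ℓ : ℝ) + 1) * c ℓ :=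
    tsum_nonneg (fun ℓ => mul_nonneg (by positivity) (hc ℓ))
  have hpartial : ∑ ℓ ∈ Finset.range k, ((ℓ : ℝ) + 1) * c ℓ
      ≤ ∑' ℓ : ℕ, ((ℓ : ℝ) + 1) * c ℓ :=
    Summable.sum_le_tsum _ (fun ℓ _ => mul_nonneg (by positivity) (hc ℓ)) hcsum
  -- main chain
  have key : τ₀ * (k+1) * a k ^ 2 ≤ D + τbar * ∑' ℓ : ℕ, ((ℓ : ℝ) + 1) * c ℓ := by
    have h1 : τ₀ * (k+1) * a k ^ 2 ≤ ∑ j ∈ Finset.range (k+1), τ j * a k ^ 2 := by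
      have : τ₀ * (k+1) * a k ^ 2 = ∑ j ∈ Finset.range (k+1), τ₀ * a k ^ 2 := by
        simp [Finset.sum_const]; ring
      rw [this]
      exact Finset.sum_le_sum fun j _ =>
        mul_le_mul_of_nonneg_right (hτlow j) (sq_nonneg _)
    have h2 : ∑ j ∈ Finset.range (k+1), τ j * a k ^ 2
        ≤ ∑ j ∈ Finset.range (k+1), (τ j * a j ^ 2 + τbar * ∑ ℓ ∈ Finset.Ico j k, c ℓ) := by
      apply Finset.sum_le_sum
      intro j hj
      have hjk := Nat.lt_succ_iff.mp (Finset.mem_range.mp hj)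
      have hτj : 0 ≤ τ j := le_trans (le_of_lt hτ₀) (hτlow j)
      have hcs : 0 ≤ ∑ ℓ ∈ Finset.Ico j k, c ℓ :=
        Finset.sum_nonneg fun ℓ _ => hc ℓ
      calc τ j * a k ^ 2 ≤ τ j * (a j ^ 2 + ∑ ℓ ∈ Finset.Ico j k, c ℓ) :=
            mul_le_mul_of_nonneg_left (hmono j k hjk) hτj
        _ = τ j * a j ^ 2 + τ j * ∑ ℓ ∈ Finset.Ico j k, c ℓ := by ring
        _ ≤ τ j * a j ^ 2 + τbar * ∑ ℓ ∈ Finset.Ico j k, c ℓ := by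
            have := mul_le_mul_of_nonneg_right (hτup j) hcs
            linarith
    have h3 : ∑ j ∈ Finset.range (k+1), (τ j * a j ^ 2 + τbar * ∑ ℓ ∈ Finset.Ico j k, c ℓ)
        = (∑ j ∈ Finset.range (k+1), τ j * a j ^ 2)
          + τbar * ∑ ℓ ∈ Finset.range k, ((ℓ : ℝ) + 1) * c ℓ := by
      rw [Finset.sum_add_distrib, ← Finset.mul_sum, hswap k]
    have h4 : τbar * ∑ ℓ ∈ Finset.range k, ((ℓ : ℝ) + 1) * c ℓ
        ≤ τbar * ∑' ℓ : ℕ, ((ℓ : ℝ) + 1) * c ℓ :=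
      mul_le_mul_of_nonneg_left hpartial hτbar
    have := hD k
    calc τ₀ * (k+1) * a k ^ 2 ≤ _ := h1
      _ ≤ _ := h2
      _ = _ := h3
      _ ≤ D + τbar * ∑' ℓ : ℕ, ((ℓ : ℝ) + 1) * c ℓ := by linarith
  have hpos : 0 < τ₀ * ((k : ℝ) + 1) := by positivity
  rw [le_div_iff₀ hpos]
  calc a k ^ 2 * (τ₀ * ((k:ℝ)+1)) = τ₀ * ((k:ℝ)+1) * a k ^ 2 := by ring
    _ ≤ _ := key
end
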